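/- Let Γ be a tropical curve, P ∈ Γ, and let D be a P-reduced divisor on Γ. Then every rational function f ∈ R(D) attains its maximum value over Γ at the point P. -/
import Mathlib


open scoped Classical

/-- A combinatorial model of a metric graph: a finite multigraph with positive
edge lengths. -/
structure GraphModel where
  V : Type
  E : Type
  [fintV : Fintype V]
  [fintE : Fintype E]
  src : E → V
  tgt : E → V
  len : E → ℝ
  len_pos : ∀ e, 0 < len e

attribute [instance] GraphModel.fintV GraphModel.fintE

/-- A (compact, connected) tropical curve: a compact connected metric space `Γ`
which is the geometric realization of a finite multigraph with positive edge
lengths, equipped with the induced path metric.  Each edge `e` is realized by a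
parametrization `edge e : [0, len e] → Γ` joining its endpoints, injective on the
interior, the interiors of distinct edges are disjoint and avoid the vertices,
the edges and vertices cover `Γ`, and the metric is the associated path metric. -/
structure TropicalCurve where
  Γ : Type
  [met : MetricSpace Γ]
  [cpt : CompactSpace Γ]
  [conn : ConnectedSpace Γ]
  G : GraphModel
  vtx : G.V → Γ
  edge : G.E → ℝ → Γ
  vtx_inj : Function.Injective vtx
  edge_src : ∀ e, edge e 0 = vtx (G.src e)
  edge_tgt : ∀ e, edge e (G.len e) = vtx (G.tgt e)
  edge_inj : ∀ e, Set.InjOn (edge e) (Set.Ioo 0 (G.len e))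
  interior_disjoint : ∀ e e' t t', t ∈ Set.Ioo 0 (G.len e) → t' ∈ Set.Ioo 0 (G.len e') →
    edge e t = edge e' t' → e = e' ∧ t = t'
  interior_not_vtx : ∀ e t v, t ∈ Set.Ioo 0 (G.len e) → edge e t ≠ vtx v
  cover : ∀ x : Γ, (∃ v, x = vtx v) ∨ ∃ e t, t ∈ Set.Ioo 0 (G.len e) ∧ x = edge e t
  path_metric : ∀ x y : Γ, dist x y = sInf { d : ℝ | ∃ (n : ℕ) (p : ℕ → Γ) (δ : ℕ → ℝ),
    p 0 = x ∧ p n = y ∧ (∀ i < n, ∃ (e : G.E) (s t : ℝ), s ∈ Set.Icc 0 (G.len e) ∧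
      t ∈ Set.Icc 0 (G.len e) ∧ p i = edge e s ∧ p (i+1) = edge e t ∧ δ i = |s - t|) ∧
    d = ∑ i ∈ Finset.range n, δ i }

attribute [instance] TropicalCurve.met TropicalCurve.cpt TropicalCurve.conn

namespace TropicalCurve

variable (C : TropicalCurve)

/-- A divisor on a tropical curve: a finitely supported function `Γ → ℤ`. -/
abbrev Divisor := C.Γ →₀ ℤ

/-- A divisor is effective if all its coefficients are nonnegative. -/
def Effective (D : Divisor C) : Prop := ∀ v, 0 ≤ D v

/-- The degree of a divisor: the sum of its coefficients. -/
def deg (D : Divisor C) : ℤ := D.sum fun _ n => n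

/-- `f` has (outgoing) slope `m` to the right of the point with parameter `t₀`
on the edge `e`. -/
def HasSlopeR (f : C.Γ → ℝ) (e : C.G.E) (t₀ : ℝ) (m : ℤ) : Prop :=
  ∃ ε > 0, t₀ + ε ≤ C.G.len e ∧ ∀ s ∈ Set.Icc t₀ (t₀ + ε),
    f (C.edge e s) = f (C.edge e t₀) + m * (s - t₀)

/-- `f` has (outgoing) slope `m` to the left of the point with parameter `t₀`
on the edge `e`. -/
def HasSlopeL (f : C.Γ → ℝ) (e : C.G.E) (t₀ : ℝ) (m : ℤ) : Prop :=
  ∃ ε > 0, 0 ≤ t₀ - ε ∧ ∀ s ∈ Set.Icc (t₀ - ε) t₀,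
    f (C.edge e s) = f (C.edge e t₀) + m * (t₀ - s)

/-- The branches (outgoing directions) at a point `x` of a tropical curve.  A
branch is encoded by an edge `e`, a parameter `t` with `edge e t = x`, and a
Boolean : `true` for the rightward direction, `false` for the leftward one. -/
def IsBranchAt (b : C.G.E × ℝ × Bool) (x : C.Γ) : Prop :=
  C.edge b.1 b.2.1 = x ∧ b.2.1 ∈ Set.Icc 0 (C.G.len b.1) ∧
    (if b.2.2 then b.2.1 < C.G.len b.1 else 0 < b.2.1)

/-- `ord_f(x) = n` : the sum of the outgoing slopes of `f` over all branches
emanating from `x` equals `n`. -/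
def HasOrderAt (f : C.Γ → ℝ) (x : C.Γ) (n : ℤ) : Prop :=
  ∃ (S : Finset (C.G.E × ℝ × Bool)) (m : C.G.E × ℝ × Bool → ℤ),
    (∀ b, b ∈ S ↔ C.IsBranchAt b x) ∧
    (∀ b ∈ S, if b.2.2 then C.HasSlopeR f b.1 b.2.1 (m b)
      else C.HasSlopeL f b.1 b.2.1 (m b)) ∧
    n = ∑ b ∈ S, m b

/-- A rational function on a tropical curve: a continuous function which is
piecewise linear with integer slopes and finitely many linear pieces on every
edge. -/
def IsRational (f : C.Γ → ℝ) : Prop :=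
  Continuous f ∧ ∀ e : C.G.E, ∃ (n : ℕ) (t : ℕ → ℝ), 0 < n ∧ t 0 = 0 ∧ t n = C.G.len e ∧
    (∀ i < n, t i < t (i+1)) ∧
    ∀ i < n, ∃ (m : ℤ) (b : ℝ), ∀ s ∈ Set.Icc (t i) (t (i+1)),
      f (C.edge e s) = m * s + b

/-- Two divisors are linearly equivalent if their difference is the divisor of a
rational function: `D - D' = div(f)`. -/
def LinEquiv (D D' : Divisor C) : Prop :=
  ∃ f : C.Γ → ℝ, C.IsRational f ∧ ∀ x, C.HasOrderAt f x (D x - D' x)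

/-- `f ∈ R(D)` : `f` is a rational function with `D + div(f) ≥ 0`. -/
def InR (D : Divisor C) (f : C.Γ → ℝ) : Prop :=
  C.IsRational f ∧ ∃ E : Divisor C, C.Effective E ∧ ∀ x, C.HasOrderAt f x (E x - D x)

/-- The branch `b` at `v` leaves the set `X`: some initial punctured segment
along `b` stays in `Γ ∖ (X ∖ {v})`. -/
def BranchLeaving (X : Set C.Γ) (v : C.Γ) (b : C.G.E × ℝ × Bool) : Prop :=
  C.IsBranchAt b v ∧
    (if b.2.2 then ∃ ε > 0, b.2.1 + ε ≤ C.G.len b.1 ∧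
        ∀ s ∈ Set.Ioc b.2.1 (b.2.1 + ε), C.edge b.1 s ∈ X → C.edge b.1 s = v
      else ∃ ε > 0, 0 ≤ b.2.1 - ε ∧
        ∀ s ∈ Set.Ico (b.2.1 - ε) b.2.1, C.edge b.1 s ∈ X → C.edge b.1 s = v)

/-- `deg_X^out(v)` : the number of edges (branch directions) leaving `X` at `v`,
i.e. the maximal number of internally disjoint segments in `Γ ∖ (X ∖ {v})` with
an end at `v`. -/
noncomputable def outDeg (X : Set C.Γ) (v : C.Γ) : ℕ :=
  {b | C.BranchLeaving X v b}.ncard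

/-- The degree (valence) of a point: the number of branches of `Γ` at `v`. -/
noncomputable def pointDeg (v : C.Γ) : ℕ := C.outDeg {v} v

/-- `D` is `v₀`-reduced: its coefficients away from `v₀` are nonnegative, and
every closed connected subset `X ⊆ Γ` avoiding `v₀` has a non-saturated boundary
point, i.e. some `v ∈ ∂X` with `D(v) < deg_X^out(v)`. -/
def IsReduced (v₀ : C.Γ) (D : Divisor C) : Prop :=
  (∀ v, v ≠ v₀ → 0 ≤ D v) ∧
  ∀ X : Set C.Γ, IsClosed X → IsConnected X → v₀ ∉ X →
    ∃ v ∈ frontier X, D v < (C.outDeg X v : ℤ)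

/-- `D` is linearly equivalent to an effective divisor. -/
def EquivEffective (D : Divisor C) : Prop :=
  ∃ E : Divisor C, C.Effective E ∧ C.LinEquiv D E

/-- The rank of a divisor: the largest `r ≥ -1` such that for every effective
divisor `E` of degree `r`, `D - E` is linearly equivalent to an effective
divisor (`-1` when `D` itself is not equivalent to an effective divisor). -/
noncomputable def rank (D : Divisor C) : ℤ :=
  sSup {r : ℤ | -1 ≤ r ∧ ∀ E : Divisor C, C.Effective E → C.deg E = r →
    C.EquivEffective (D - E)}

/-- The genus of a tropical curve: its first Betti number, computed from any
model as `#E - #V + 1`. -/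
noncomputable def genus : ℤ :=
  (Fintype.card C.G.E : ℤ) - (Fintype.card C.G.V : ℤ) + 1

/-- `D` is very ample: the rational functions in `R(D)` separate the points
of `Γ`. -/
def VeryAmple (D : Divisor C) : Prop :=
  ∀ P Q : C.Γ, P ≠ Q → ∃ f g : C.Γ → ℝ, C.InR D f ∧ C.InR D g ∧ f P - g P ≠ f Q - g Q

/-- `D` is ample: some positive integer multiple of `D` is very ample. -/
def Ample (D : Divisor C) : Prop := ∃ m : ℕ, 0 < m ∧ C.VeryAmple (m • D)

end TropicalCurve

namespace TropicalCurve

variable {C : TropicalCurve}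

/-- Edge parametrizations are 1-Lipschitz for the path metric. -/
lemma dist_edge_le (C : TropicalCurve) (e : C.G.E) {s t : ℝ}
    (hs : s ∈ Set.Icc 0 (C.G.len e)) (ht : t ∈ Set.Icc 0 (C.G.len e)) :
    dist (C.edge e s) (C.edge e t) ≤ |s - t| := by
  rw [C.path_metric]
  apply csInf_le
  · refine ⟨0, fun d hd => ?_⟩
    obtain ⟨n, p, δ, -, -, hstep, rfl⟩ := hd
    refine Finset.sum_nonneg fun i hi => ?_
    obtain ⟨e', s', t', -, -, -, -, hδ⟩ := hstep i (Finset.mem_range.mp hi)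
    rw [hδ]; exact abs_nonneg _
  · refine ⟨1, fun i => if i = 0 then C.edge e s else C.edge e t, fun _ => |s - t|,
      by simp, by simp, ?_, by simp⟩
    intro i hi
    interval_cases i
    exact ⟨e, s, t, hs, ht, by simp, by simp, rfl⟩

lemma continuousOn_edge (C : TropicalCurve) (e : C.G.E) :
    ContinuousOn (C.edge e) (Set.Icc 0 (C.G.len e)) := by
  refine (LipschitzOnWith.of_dist_le_mul (K := 1) fun x hx y hy => ?_).continuousOn
  simpa [Real.dist_eq] using C.dist_edge_le e hx hy

lemma isClosed_connectedComponentIn {F : Set C.Γ} {x : C.Γ} (hF : IsClosed F) :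
    IsClosed (connectedComponentIn F x) := by
  rw [connectedComponentIn]
  split
  · exact hF.isClosedMap_subtype_val _ isClosed_connectedComponent
  · exact isClosed_empty

end TropicalCurve

/-- Let `Γ` be a tropical curve, `P ∈ Γ`, and let `D` be a
`P`-reduced divisor on `Γ`. Then every rational function `f ∈ R(D)` attains its
maximum value over `Γ` at the point `P`. -/
theorem rational_function_max_at_reduced_base (C : TropicalCurve) (P : C.Γ)
    (D : TropicalCurve.Divisor C) (hD : C.IsReduced P D)
    (f : C.Γ → ℝ) (hf : C.InR D f) :
    ∀ Q : C.Γ, f Q ≤ f P := by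
  by_contra hcon
  push_neg at hcon
  obtain ⟨Q, hQ⟩ := hcon
  obtain ⟨hfrat, E, hE, hord⟩ := hf
  -- a global maximum point x₀
  obtain ⟨x₀, -, hmax₀⟩ := isCompact_univ.exists_isMaxOn (Set.univ_nonempty)
    hfrat.1.continuousOn
  have hmax : ∀ y, f y ≤ f x₀ := fun y => hmax₀ (Set.mem_univ y)
  set M := f x₀ with hM
  have hPM : f P < M := lt_of_lt_of_le hQ (hmax Q)
  -- the max-level set and its connected component
  set X : Set C.Γ := {x | f x = M} with hXdef
  have hXclosed : IsClosed X := isClosed_eq hfrat.1 continuous_const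
  have hx₀X : x₀ ∈ X := rfl
  set X' : Set C.Γ := connectedComponentIn X x₀ with hX'def
  have hX'closed : IsClosed X' := TropicalCurve.isClosed_connectedComponentIn hXclosed
  have hX'conn : IsConnected X' := isConnected_connectedComponentIn_iff.mpr hx₀X
  have hX'sub : X' ⊆ X := connectedComponentIn_subset X x₀
  have hPX' : P ∉ X' := fun h => absurd (hX'sub h) (by simp [X]; exact ne_of_lt hPM)
  obtain ⟨v, hvfr, hvD⟩ := hD.2 X' hX'closed hX'conn hPX'
  have hvX' : v ∈ X' := by
    have := frontier_subset_closure (s := X') hvfr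
    rwa [hX'closed.closure_eq] at this
  have hfv : f v = M := hX'sub hvX'
  -- order of f at v
  obtain ⟨S, m, hSiff, hslope, hsum⟩ := hord v
  -- all slopes at a maximum are ≤ 0
  have h1 : ∀ b ∈ S, m b ≤ 0 := by
    intro b hb
    obtain ⟨hedge, htIcc, hdir⟩ := (hSiff b).mp hb
    have hsl := hslope b hb
    by_contra hm
    push_neg at hm
    rcases b with ⟨e, t, dir⟩
    cases dir with
    | true =>
      simp only [if_true] at hsl
      obtain ⟨ε, hε, hεlen, hval⟩ := hsl
      have hv := hval (t + ε) ⟨by linarith, le_refl _⟩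
      have h2 := hmax (C.edge e (t + ε))
      rw [hv, hedge, hfv] at h2
      have : (0:ℝ) < (m (e, t, true) : ℝ) * ε :=
        mul_pos (by exact_mod_cast hm) hε
      simp only [add_sub_cancel_left] at h2
      linarith
    | false =>
      simp only [Bool.false_eq_true, if_false] at hsl
      obtain ⟨ε, hε, hεlen, hval⟩ := hsl
      have hv := hval (t - ε) ⟨le_refl _, by linarith⟩
      have h2 := hmax (C.edge e (t - ε))
      rw [hv, hedge, hfv] at h2
      have : (0:ℝ) < (m (e, t, false) : ℝ) * ε :=
        mul_pos (by exact_mod_cast hm) hε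
      have : t - (t - ε) = ε := by ring
      rw [this] at h2
      linarith [mul_pos (show (0:ℝ) < (m (e, t, false) : ℝ) by exact_mod_cast hm) hε]
  -- the leaving branches, as a finset
  set L : Finset (C.G.E × ℝ × Bool) := S.filter (fun b => C.BranchLeaving X' v b) with hLdef
  have hLset : {b | C.BranchLeaving X' v b} = (L : Set (C.G.E × ℝ × Bool)) := by
    ext b
    simp only [Set.mem_setOf_eq, hLdef, Finset.coe_filter, Set.mem_setOf_eq,
      Finset.mem_coe]
    exact ⟨fun h => ⟨(hSiff b).mpr h.1, h⟩, fun h => h.2⟩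
  have houtdeg : C.outDeg X' v = L.card := by
    rw [TropicalCurve.outDeg, hLset, Set.ncard_coe_finset]
  -- slopes of leaving branches are ≤ -1
  have h2 : ∀ b ∈ L, m b ≤ -1 := by
    intro b hbL
    obtain ⟨hbS, hleave⟩ := Finset.mem_filter.mp hbL
    have hm0 : m b ≤ 0 := h1 b hbS
    rcases lt_or_eq_of_le hm0 with h | h
    · omega
    · -- slope 0 : the branch stays in the level set, contradiction with leaving
      exfalso
      obtain ⟨hedge, htIcc, hdir⟩ := (hSiff b).mp hbS
      have hsl := hslope b hbS
      obtain ⟨-, hlv⟩ := hleave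
      rcases b with ⟨e, t, dir⟩
      have hmz : m (e, t, dir) = 0 := h
      cases dir with
      | true =>
        simp only [if_true] at hsl hlv hdir
        obtain ⟨ε, hε, hεlen, hval⟩ := hsl
        obtain ⟨ε', hε', hε'len, hprop⟩ := hlv
        set s : ℝ := min (t + min ε ε') ((t + C.G.len e) / 2) with hsdef
        have hts : t < s := lt_min (by have := lt_min hε hε'; linarith) (by linarith [hdir])
        have hslen : s < C.G.len e := lt_of_le_of_lt (min_le_right _ _) (by linarith [hdir])
        have hsε : s ≤ t + ε := le_trans (min_le_left _ _) (by linarith [min_le_left ε ε'])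
        have hsε' : s ≤ t + ε' := le_trans (min_le_left _ _) (by linarith [min_le_right ε ε'])
        -- f = M on [t, s]
        have hfM : ∀ s' ∈ Set.Icc t s, f (C.edge e s') = M := by
          intro s' hs'
          have := hval s' ⟨hs'.1, le_trans hs'.2 hsε⟩
          rw [this, hedge, hfv, hmz]
          push_cast; ring
        -- the segment lies in X'
        have hA : C.edge e '' Set.Icc t s ⊆ X' := by
          have hconn : IsPreconnected (C.edge e '' Set.Icc t s) :=
            isPreconnected_Icc.image _ ((C.continuousOn_edge e).mono
              (Set.Icc_subset_Icc htIcc.1 (le_of_lt hslen)))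
          have hsubX : C.edge e '' Set.Icc t s ⊆ X := by
            rintro y ⟨s', hs', rfl⟩; exact hfM s' hs'
          have hvmem : v ∈ C.edge e '' Set.Icc t s :=
            ⟨t, ⟨le_refl _, le_of_lt hts⟩, hedge⟩
          have hss := hconn.subset_connectedComponentIn hvmem hsubX
          have hcc : connectedComponentIn X x₀ = connectedComponentIn X v :=
            connectedComponentIn_eq (show v ∈ connectedComponentIn X x₀ from hX'def ▸ hvX')
          rwa [← hcc, ← hX'def] at hss
        have hsX' : C.edge e s ∈ X' := hA ⟨s, ⟨le_of_lt hts, le_refl _⟩, rfl⟩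
        have hsv : C.edge e s = v := hprop s ⟨hts, hsε'⟩ hsX'
        rcases lt_or_eq_of_le htIcc.1 with ht0 | ht0
        · -- t interior
          have := C.edge_inj e ⟨lt_trans ht0 hts, hslen⟩ ⟨ht0, hdir⟩ (hsv.trans hedge.symm)
          linarith
        · -- t = 0 : v is a vertex, but edge e s is interior
          have hvtx : C.edge e s = C.vtx (C.G.src e) := by
            rw [hsv, ← hedge, ← ht0, C.edge_src]
          exact C.interior_not_vtx e s (C.G.src e) ⟨by rw [ht0]; exact hts, hslen⟩ hvtx
      | false =>
        simp only [Bool.false_eq_true, if_false] at hsl hlv hdir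
        obtain ⟨ε, hε, hεlen, hval⟩ := hsl
        obtain ⟨ε', hε', hε'len, hprop⟩ := hlv
        set s : ℝ := max (t - min ε ε') (t / 2) with hsdef
        have hts : s < t := max_lt (by have := lt_min hε hε'; linarith) (by linarith [hdir])
        have hs0 : 0 < s := lt_of_lt_of_le (by linarith [hdir]) (le_max_right _ _)
        have hslen : s < C.G.len e := lt_of_lt_of_le hts htIcc.2
        have hsε : t - ε ≤ s := le_trans (by linarith [min_le_left ε ε']) (le_max_left _ _)
        have hsε' : t - ε' ≤ s := le_trans (by linarith [min_le_right ε ε']) (le_max_left _ _)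
        have hfM : ∀ s' ∈ Set.Icc s t, f (C.edge e s') = M := by
          intro s' hs'
          have := hval s' ⟨le_trans hsε hs'.1, hs'.2⟩
          rw [this, hedge, hfv, hmz]
          push_cast; ring
        have hA : C.edge e '' Set.Icc s t ⊆ X' := by
          have hconn : IsPreconnected (C.edge e '' Set.Icc s t) :=
            isPreconnected_Icc.image _ ((C.continuousOn_edge e).mono
              (Set.Icc_subset_Icc (le_of_lt hs0) htIcc.2))
          have hsubX : C.edge e '' Set.Icc s t ⊆ X := by
            rintro y ⟨s', hs', rfl⟩; exact hfM s' hs'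
          have hvmem : v ∈ C.edge e '' Set.Icc s t :=
            ⟨t, ⟨le_of_lt hts, le_refl _⟩, hedge⟩
          have hss := hconn.subset_connectedComponentIn hvmem hsubX
          have hcc : connectedComponentIn X x₀ = connectedComponentIn X v :=
            connectedComponentIn_eq (show v ∈ connectedComponentIn X x₀ from hX'def ▸ hvX')
          rwa [← hcc, ← hX'def] at hss
        have hsX' : C.edge e s ∈ X' := hA ⟨s, ⟨le_refl _, le_of_lt hts⟩, rfl⟩
        have hsv : C.edge e s = v := hprop s ⟨hsε', hts⟩ hsX'
        rcases lt_or_eq_of_le htIcc.2 with htl | htl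
        · have := C.edge_inj e ⟨hs0, hslen⟩ ⟨hdir, htl⟩ (hsv.trans hedge.symm)
          linarith
        · have hvtx : C.edge e s = C.vtx (C.G.tgt e) := by
            rw [hsv, ← hedge, htl, C.edge_tgt]
          exact C.interior_not_vtx e s (C.G.tgt e) ⟨hs0, hslen⟩ hvtx
  -- sum up
  have hsum_le : E v - D v ≤ -(L.card : ℤ) := by
    rw [hsum, ← Finset.sum_filter_add_sum_filter_not S (fun b => C.BranchLeaving X' v b) m]
    have hA : ∑ b ∈ L, m b ≤ L.card • (-1 : ℤ) := Finset.sum_le_card_nsmul _ _ _ h2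
    have hB : ∑ b ∈ S.filter (fun b => ¬ C.BranchLeaving X' v b), m b ≤ 0 :=
      Finset.sum_nonpos fun b hb => h1 b (Finset.mem_filter.mp hb).1
    have : (L.card : ℤ) • (-1 : ℤ) = -(L.card : ℤ) := by simp
    rw [nsmul_eq_mul] at hA
    linarith
  have hEv : 0 ≤ E v := hE v
  rw [houtdeg] at hvD
  omega
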